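/- If (ũ, s̃, φ̃) solves the dDS system, then for c ≠ 0 and ct+d > 0, the functions u(x,y,t) = (ct+d)^{−2} ũ(X,Y,T), s(x,y,t) = s̃(X,Y,T) + c(x²+σy²)/(2(ct+d)), φ(x,y,t) = (ct+d)^{−2} φ̃(X,Y,T), where X = x/(ct+d), Y = y/(ct+d), T = (at+b)/(ct+d) with ad−bc = 1, also solve the dDS system u_t + (u s_x)_x + σ(u s_y)_y = 0, s_t + (1/2)(s_x² + σ s_y²) − δφ = 0, σφ_yy − φ_xx + u_xx + σu_yy = 0. -/

import Mathlib

noncomputable section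

/-- Partial derivative in the first (x) argument. -/
def px (f : ℝ → ℝ → ℝ → ℝ) : ℝ → ℝ → ℝ → ℝ :=
  fun x y t => deriv (fun x' => f x' y t) x

/-- Partial derivative in the second (y) argument. -/
def py (f : ℝ → ℝ → ℝ → ℝ) : ℝ → ℝ → ℝ → ℝ :=
  fun x y t => deriv (fun y' => f x y' t) y

/-- Partial derivative in the third (t) argument. -/
def pt (f : ℝ → ℝ → ℝ → ℝ) : ℝ → ℝ → ℝ → ℝ :=
  fun x y t => deriv (fun t' => f x y t') t

/-- The dispersionless Davey–Stewartson system at a point (x,y,t):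
u_t + (u s_x)_x + σ(u s_y)_y = 0,
s_t + (1/2)(s_x² + σ s_y²) − δφ = 0,
σφ_yy − φ_xx + u_xx + σu_yy = 0. -/
def dDSeq (σ δ : ℝ) (u s φ : ℝ → ℝ → ℝ → ℝ) (x y t : ℝ) : Prop :=
  pt u x y t + px (fun x y t => u x y t * px s x y t) x y t
      + σ * py (fun x y t => u x y t * py s x y t) x y t = 0 ∧
  pt s x y t + (1/2) * ((px s x y t) ^ 2 + σ * (py s x y t) ^ 2) - δ * φ x y t = 0 ∧
  σ * py (py φ) x y t - px (px φ) x y t + px (px u) x y t + σ * py (py u) x y t = 0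

open Filter Topology

lemma HasDerivAt.congr_d {f : ℝ → ℝ} {v w x : ℝ} (h : HasDerivAt f v x) (hw : w = v) :
    HasDerivAt f w x := hw ▸ h

lemma hasDerivAt_comp3 (G : ℝ × ℝ × ℝ → ℝ) {p : ℝ × ℝ × ℝ} (hG : DifferentiableAt ℝ G p)
    {γ₁ γ₂ γ₃ : ℝ → ℝ} {d₁ d₂ d₃ τ : ℝ}
    (h₁ : HasDerivAt γ₁ d₁ τ) (h₂ : HasDerivAt γ₂ d₂ τ) (h₃ : HasDerivAt γ₃ d₃ τ)
    (hp : p = (γ₁ τ, γ₂ τ, γ₃ τ)) {v : ℝ}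
    (hv : v = d₁ * fderiv ℝ G p (1, 0, 0) + d₂ * fderiv ℝ G p (0, 1, 0)
        + d₃ * fderiv ℝ G p (0, 0, 1)) :
    HasDerivAt (fun τ' => G (γ₁ τ', γ₂ τ', γ₃ τ')) v τ := by
  have hγ : HasDerivAt (fun τ' => ((γ₁ τ', γ₂ τ', γ₃ τ') : ℝ × ℝ × ℝ)) (d₁, d₂, d₃) τ :=
    h₁.prodMk (h₂.prodMk h₃)
  subst hp
  have h := (hG.hasFDerivAt).comp_hasDerivAt τ hγ
  refine h.congr_d ?_
  rw [hv]
  have e123 : ((d₁, d₂, d₃) : ℝ × ℝ × ℝ)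
      = d₁ • ((1 : ℝ), (0 : ℝ), (0 : ℝ)) + d₂ • ((0:ℝ), (1:ℝ), (0:ℝ)) + d₃ • ((0:ℝ), (0:ℝ), (1:ℝ)) := by
    simp [Prod.ext_iff]
  rw [e123, map_add, map_add, map_smul, map_smul, map_smul]
  simp [smul_eq_mul]

lemma px_eq_D (G : ℝ → ℝ → ℝ → ℝ) (F : ℝ × ℝ × ℝ → ℝ)
    (hGF : ∀ a b c, G a b c = F (a, b, c)) {x y t : ℝ}
    (hF : DifferentiableAt ℝ F (x, y, t)) :
    px G x y t = fderiv ℝ F (x, y, t) (1, 0, 0) := by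
  have h : HasDerivAt (fun x' => F (x', y, t)) (fderiv ℝ F (x, y, t) (1, 0, 0)) x :=
    hasDerivAt_comp3 F hF (hasDerivAt_id x) (hasDerivAt_const x y) (hasDerivAt_const x t) rfl
      (by ring)
  have hfe : (fun x' => G x' y t) = fun x' => F (x', y, t) := funext fun x' => hGF x' y t
  show deriv (fun x' => G x' y t) x = _
  rw [hfe]
  exact h.deriv

lemma py_eq_D (G : ℝ → ℝ → ℝ → ℝ) (F : ℝ × ℝ × ℝ → ℝ)
    (hGF : ∀ a b c, G a b c = F (a, b, c)) {x y t : ℝ}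
    (hF : DifferentiableAt ℝ F (x, y, t)) :
    py G x y t = fderiv ℝ F (x, y, t) (0, 1, 0) := by
  have h : HasDerivAt (fun y' => F (x, y', t)) (fderiv ℝ F (x, y, t) (0, 1, 0)) y :=
    hasDerivAt_comp3 F hF (hasDerivAt_const y x) (hasDerivAt_id y) (hasDerivAt_const y t) rfl
      (by ring)
  have hfe : (fun y' => G x y' t) = fun y' => F (x, y', t) := funext fun y' => hGF x y' t
  show deriv (fun y' => G x y' t) y = _
  rw [hfe]
  exact h.deriv

lemma pt_eq_D (G : ℝ → ℝ → ℝ → ℝ) (F : ℝ × ℝ × ℝ → ℝ)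
    (hGF : ∀ a b c, G a b c = F (a, b, c)) {x y t : ℝ}
    (hF : DifferentiableAt ℝ F (x, y, t)) :
    pt G x y t = fderiv ℝ F (x, y, t) (0, 0, 1) := by
  have h : HasDerivAt (fun t' => F (x, y, t')) (fderiv ℝ F (x, y, t) (0, 0, 1)) t :=
    hasDerivAt_comp3 F hF (hasDerivAt_const t x) (hasDerivAt_const t y) (hasDerivAt_id t) rfl
      (by ring)
  have hfe : (fun t' => G x y t') = fun t' => F (x, y, t') := funext fun t' => hGF x y t'
  show deriv (fun t' => G x y t') t = _
  rw [hfe]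
  exact h.deriv

lemma differentiable_D (F : ℝ × ℝ × ℝ → ℝ) (hF : ContDiff ℝ (⊤ : ℕ∞) F) (v : ℝ × ℝ × ℝ) :
    Differentiable ℝ (fun q => fderiv ℝ F q v) := by
  have h : ContDiff ℝ (⊤ : ℕ∞) fun q => fderiv ℝ F q v :=
    (ContinuousLinearMap.apply ℝ ℝ v).contDiff.comp (hF.fderiv_right (by simp))
  exact h.differentiable (by simp)

lemma fderiv_mul_apply' {F G : ℝ × ℝ × ℝ → ℝ} {p : ℝ × ℝ × ℝ}
    (hF : DifferentiableAt ℝ F p) (hG : DifferentiableAt ℝ G p) (v : ℝ × ℝ × ℝ) :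
    fderiv ℝ (fun q => F q * G q) p v
      = F p * fderiv ℝ G p v + G p * fderiv ℝ F p v := by
  rw [fderiv_fun_mul hF hG]
  simp [smul_eq_mul]

set_option maxHeartbeats 2000000

/-- SL(2,ℝ) symmetry: if (ũ,s̃,φ̃) solves the dDS system, then so do
u = (ct+d)⁻² ũ(X,Y,T), s = s̃(X,Y,T) + c(x²+σy²)/(2(ct+d)), φ = (ct+d)⁻² φ̃(X,Y,T),
with X = x/(ct+d), Y = y/(ct+d), T = (at+b)/(ct+d), ad−bc = 1, on ct+d > 0. -/
theorem stmt_11 (σ δ a b c d : ℝ)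
    (hσ : σ = 1 ∨ σ = -1) (hδ : δ ≠ 0) (habcd : a * d - b * c = 1) (hc : c ≠ 0)
    (ut st φt : ℝ → ℝ → ℝ → ℝ)
    (hsm_u : ContDiff ℝ (⊤ : ℕ∞) (fun p : ℝ × ℝ × ℝ => ut p.1 p.2.1 p.2.2))
    (hsm_s : ContDiff ℝ (⊤ : ℕ∞) (fun p : ℝ × ℝ × ℝ => st p.1 p.2.1 p.2.2))
    (hsm_φ : ContDiff ℝ (⊤ : ℕ∞) (fun p : ℝ × ℝ × ℝ => φt p.1 p.2.1 p.2.2))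
    (hsol : ∀ x y t : ℝ, dDSeq σ δ ut st φt x y t)
    (u s φ : ℝ → ℝ → ℝ → ℝ)
    (hu : ∀ x y t, 0 < c * t + d → u x y t
      = ((c * t + d) ^ 2)⁻¹
        * ut (x / (c * t + d)) (y / (c * t + d)) ((a * t + b) / (c * t + d)))
    (hs : ∀ x y t, 0 < c * t + d → s x y t
      = st (x / (c * t + d)) (y / (c * t + d)) ((a * t + b) / (c * t + d))
        + c * (x ^ 2 + σ * y ^ 2) / (2 * (c * t + d)))
    (hφ : ∀ x y t, 0 < c * t + d → φ x y t
      = ((c * t + d) ^ 2)⁻¹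
        * φt (x / (c * t + d)) (y / (c * t + d)) ((a * t + b) / (c * t + d))) :
    ∀ x y t : ℝ, 0 < c * t + d → dDSeq σ δ u s φ x y t := by
  have hσ2 : σ ^ 2 = 1 := by rcases hσ with h | h <;> rw [h] <;> norm_num
  set Uf : ℝ × ℝ × ℝ → ℝ := fun q => ut q.1 q.2.1 q.2.2 with hUfdef
  set Sf : ℝ × ℝ × ℝ → ℝ := fun q => st q.1 q.2.1 q.2.2 with hSfdef
  set Φf : ℝ × ℝ × ℝ → ℝ := fun q => φt q.1 q.2.1 q.2.2 with hFfdef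
  have hUc : ContDiff ℝ (⊤ : ℕ∞) Uf := hsm_u
  have hSc : ContDiff ℝ (⊤ : ℕ∞) Sf := hsm_s
  have hΦc : ContDiff ℝ (⊤ : ℕ∞) Φf := hsm_φ
  have hUd : Differentiable ℝ Uf := hUc.differentiable (by simp)
  have hSd : Differentiable ℝ Sf := hSc.differentiable (by simp)
  have hΦd : Differentiable ℝ Φf := hΦc.differentiable (by simp)
  have hS1d := differentiable_D Sf hSc (1,0,0)
  have hS2d := differentiable_D Sf hSc (0,1,0)
  have hU1d := differentiable_D Uf hUc (1,0,0)
  have hU2d := differentiable_D Uf hUc (0,1,0)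
  have hF1d := differentiable_D Φf hΦc (1,0,0)
  have hF2d := differentiable_D Φf hΦc (0,1,0)
  have hPd : Differentiable ℝ fun q => Uf q * fderiv ℝ Sf q (1,0,0) := hUd.mul hS1d
  have hQd : Differentiable ℝ fun q => Uf q * fderiv ℝ Sf q (0,1,0) := hUd.mul hS2d
  have E1 : ∀ A B C : ℝ,
      fderiv ℝ Uf (A,B,C) (0,0,1)
      + (Uf (A,B,C) * fderiv ℝ (fun q => fderiv ℝ Sf q (1,0,0)) (A,B,C) (1,0,0)
         + fderiv ℝ Sf (A,B,C) (1,0,0) * fderiv ℝ Uf (A,B,C) (1,0,0))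
      + σ * (Uf (A,B,C) * fderiv ℝ (fun q => fderiv ℝ Sf q (0,1,0)) (A,B,C) (0,1,0)
         + fderiv ℝ Sf (A,B,C) (0,1,0) * fderiv ℝ Uf (A,B,C) (0,1,0)) = 0 := by
    intro A B C
    obtain ⟨h, -, -⟩ := hsol A B C
    rw [pt_eq_D ut Uf (fun _ _ _ => rfl) (hUd _)] at h
    rw [px_eq_D (fun x y t => ut x y t * px st x y t) (fun q => Uf q * fderiv ℝ Sf q (1,0,0))
        (fun a' b' c' => by
          show Uf (a',b',c') * px st a' b' c' = Uf (a',b',c') * fderiv ℝ Sf (a',b',c') (1,0,0)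
          rw [px_eq_D st Sf (fun _ _ _ => rfl) (hSd _)]) (hPd _)] at h
    rw [py_eq_D (fun x y t => ut x y t * py st x y t) (fun q => Uf q * fderiv ℝ Sf q (0,1,0))
        (fun a' b' c' => by
          show Uf (a',b',c') * py st a' b' c' = Uf (a',b',c') * fderiv ℝ Sf (a',b',c') (0,1,0)
          rw [py_eq_D st Sf (fun _ _ _ => rfl) (hSd _)]) (hQd _)] at h
    rw [fderiv_mul_apply' (hUd _) (hS1d _), fderiv_mul_apply' (hUd _) (hS2d _)] at h
    exact h
  have E2 : ∀ A B C : ℝ,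
      fderiv ℝ Sf (A,B,C) (0,0,1)
      + (1/2) * (fderiv ℝ Sf (A,B,C) (1,0,0) ^ 2 + σ * fderiv ℝ Sf (A,B,C) (0,1,0) ^ 2)
      - δ * φt A B C = 0 := by
    intro A B C
    obtain ⟨-, h, -⟩ := hsol A B C
    rw [pt_eq_D st Sf (fun _ _ _ => rfl) (hSd _), px_eq_D st Sf (fun _ _ _ => rfl) (hSd _),
        py_eq_D st Sf (fun _ _ _ => rfl) (hSd _)] at h
    exact h
  have E3 : ∀ A B C : ℝ,
      σ * fderiv ℝ (fun q => fderiv ℝ Φf q (0,1,0)) (A,B,C) (0,1,0)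
      - fderiv ℝ (fun q => fderiv ℝ Φf q (1,0,0)) (A,B,C) (1,0,0)
      + fderiv ℝ (fun q => fderiv ℝ Uf q (1,0,0)) (A,B,C) (1,0,0)
      + σ * fderiv ℝ (fun q => fderiv ℝ Uf q (0,1,0)) (A,B,C) (0,1,0) = 0 := by
    intro A B C
    obtain ⟨-, -, h⟩ := hsol A B C
    rw [py_eq_D (py φt) (fun q => fderiv ℝ Φf q (0,1,0))
          (fun a' b' c' => py_eq_D φt Φf (fun _ _ _ => rfl) (hΦd _)) (hF2d _),
        px_eq_D (px φt) (fun q => fderiv ℝ Φf q (1,0,0))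
          (fun a' b' c' => px_eq_D φt Φf (fun _ _ _ => rfl) (hΦd _)) (hF1d _),
        px_eq_D (px ut) (fun q => fderiv ℝ Uf q (1,0,0))
          (fun a' b' c' => px_eq_D ut Uf (fun _ _ _ => rfl) (hUd _)) (hU1d _),
        py_eq_D (py ut) (fun q => fderiv ℝ Uf q (0,1,0))
          (fun a' b' c' => py_eq_D ut Uf (fun _ _ _ => rfl) (hUd _)) (hU2d _)] at h
    exact h
  intro x y t hr
  have hr' : c * t + d ≠ 0 := ne_of_gt hr
  have hopen : ∀ᶠ t' in nhds t, 0 < c * t' + d := by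
    have hcont : Continuous fun t' : ℝ => c * t' + d := by continuity
    exact (hcont.tendsto t).eventually (eventually_gt_nhds hr)
  have hdr : HasDerivAt (fun t' : ℝ => c * t' + d) c t := by
    simpa using ((hasDerivAt_id t).const_mul c).add_const d
  have hdiv : ∀ ξ : ℝ, HasDerivAt (fun w : ℝ => w / (c*t+d)) ((c*t+d)⁻¹) ξ := fun ξ => by
    simpa [one_div] using (hasDerivAt_id ξ).div_const (c*t+d)
  have hXt : HasDerivAt (fun t' => x / (c*t'+d)) (-(c*x) * (c*t+d)⁻¹^2) t :=
    ((hasDerivAt_const t x).div hdr hr').congr_d (by field_simp; ring)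
  have hYt : HasDerivAt (fun t' => y / (c*t'+d)) (-(c*y) * (c*t+d)⁻¹^2) t :=
    ((hasDerivAt_const t y).div hdr hr').congr_d (by field_simp; ring)
  have hTt : HasDerivAt (fun t' => (a*t'+b) / (c*t'+d)) ((c*t+d)⁻¹^2) t := by
    have h0 : HasDerivAt (fun t' : ℝ => a * t' + b) a t := by
      simpa using ((hasDerivAt_id t).const_mul a).add_const b
    refine (h0.div hdr hr').congr_d ?_
    field_simp
    linear_combination -habcd
  have hEt : HasDerivAt (fun t' => ((c*t'+d)^2)⁻¹) (-2*c*(c*t+d)⁻¹^3) t :=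
    ((hdr.fun_pow 2).inv (pow_ne_zero 2 hr')).congr_d (by field_simp; ring)
  unfold dDSeq
  refine ⟨?_, ?_, ?_⟩
  · -- first equation
    simp only [pt, px, py]
    have hsx : ∀ x', deriv (fun x0 => s x0 y t) x'
        = (c*t+d)⁻¹ * fderiv ℝ Sf (x'/(c*t+d), y/(c*t+d), (a*t+b)/(c*t+d)) (1,0,0)
          + c * x' * (c*t+d)⁻¹ := by
      intro x'
      have hfe : (fun x0 => s x0 y t)
          = fun x0 => Sf (x0/(c*t+d), y/(c*t+d), (a*t+b)/(c*t+d))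
              + c * (x0^2 + σ*y^2) / (2*(c*t+d)) := funext fun x0 => hs x0 y t hr
      rw [hfe]
      have H1 : HasDerivAt (fun x0 => Sf (x0/(c*t+d), y/(c*t+d), (a*t+b)/(c*t+d)))
          ((c*t+d)⁻¹ * fderiv ℝ Sf (x'/(c*t+d), y/(c*t+d), (a*t+b)/(c*t+d)) (1,0,0)) x' :=
        hasDerivAt_comp3 Sf (hSd _) (hdiv x') (hasDerivAt_const x' (y/(c*t+d)))
          (hasDerivAt_const x' ((a*t+b)/(c*t+d))) rfl (by ring)
      have H2 : HasDerivAt (fun x0 => c * (x0^2 + σ*y^2) / (2*(c*t+d)))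
          (c * x' * (c*t+d)⁻¹) x' := by
        have hh := (((hasDerivAt_pow 2 x').add_const (σ*y^2)).const_mul c).div_const (2*(c*t+d))
        exact hh.congr_d (by field_simp; ring)
      exact (H1.add H2).deriv
    have hsxf : (fun x' => u x' y t * deriv (fun x0 => s x0 y t) x')
        = fun x' => (((c*t+d)^2)⁻¹ * Uf (x'/(c*t+d), y/(c*t+d), (a*t+b)/(c*t+d)))
            * ((c*t+d)⁻¹ * fderiv ℝ Sf (x'/(c*t+d), y/(c*t+d), (a*t+b)/(c*t+d)) (1,0,0)
              + c * x' * (c*t+d)⁻¹) := by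
      funext x'
      rw [hsx x', hu x' y t hr]
    have HF2 : HasDerivAt (fun x' => (((c*t+d)^2)⁻¹ * Uf (x'/(c*t+d), y/(c*t+d), (a*t+b)/(c*t+d)))
            * ((c*t+d)⁻¹ * fderiv ℝ Sf (x'/(c*t+d), y/(c*t+d), (a*t+b)/(c*t+d)) (1,0,0)
              + c * x' * (c*t+d)⁻¹))
        ((c*t+d)⁻¹^4 * fderiv ℝ Uf (x/(c*t+d), y/(c*t+d), (a*t+b)/(c*t+d)) (1,0,0)
            * fderiv ℝ Sf (x/(c*t+d), y/(c*t+d), (a*t+b)/(c*t+d)) (1,0,0)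
          + c*x*(c*t+d)⁻¹^4 * fderiv ℝ Uf (x/(c*t+d), y/(c*t+d), (a*t+b)/(c*t+d)) (1,0,0)
          + (c*t+d)⁻¹^4 * Uf (x/(c*t+d), y/(c*t+d), (a*t+b)/(c*t+d))
            * fderiv ℝ (fun q => fderiv ℝ Sf q (1,0,0)) (x/(c*t+d), y/(c*t+d), (a*t+b)/(c*t+d)) (1,0,0)
          + c*(c*t+d)⁻¹^3 * Uf (x/(c*t+d), y/(c*t+d), (a*t+b)/(c*t+d))) x := by
      have h1 : HasDerivAt (fun x' => Uf (x'/(c*t+d), y/(c*t+d), (a*t+b)/(c*t+d)))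
          ((c*t+d)⁻¹ * fderiv ℝ Uf (x/(c*t+d), y/(c*t+d), (a*t+b)/(c*t+d)) (1,0,0)) x :=
        hasDerivAt_comp3 Uf (hUd _) (hdiv x) (hasDerivAt_const x (y/(c*t+d)))
          (hasDerivAt_const x ((a*t+b)/(c*t+d))) rfl (by ring)
      have h1' : HasDerivAt (fun x' => ((c*t+d)^2)⁻¹ * Uf (x'/(c*t+d), y/(c*t+d), (a*t+b)/(c*t+d)))
          (((c*t+d)^2)⁻¹ * ((c*t+d)⁻¹ * fderiv ℝ Uf (x/(c*t+d), y/(c*t+d), (a*t+b)/(c*t+d)) (1,0,0))) x :=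
        h1.const_mul _
      have h2 : HasDerivAt (fun x' => fderiv ℝ Sf (x'/(c*t+d), y/(c*t+d), (a*t+b)/(c*t+d)) (1,0,0))
          ((c*t+d)⁻¹ * fderiv ℝ (fun q => fderiv ℝ Sf q (1,0,0)) (x/(c*t+d), y/(c*t+d), (a*t+b)/(c*t+d)) (1,0,0)) x :=
        hasDerivAt_comp3 (fun q => fderiv ℝ Sf q (1,0,0)) (hS1d _) (hdiv x)
          (hasDerivAt_const x (y/(c*t+d))) (hasDerivAt_const x ((a*t+b)/(c*t+d))) rfl (by ring)
      have h2' : HasDerivAt (fun x' => (c*t+d)⁻¹ * fderiv ℝ Sf (x'/(c*t+d), y/(c*t+d), (a*t+b)/(c*t+d)) (1,0,0))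
          ((c*t+d)⁻¹ * ((c*t+d)⁻¹ * fderiv ℝ (fun q => fderiv ℝ Sf q (1,0,0)) (x/(c*t+d), y/(c*t+d), (a*t+b)/(c*t+d)) (1,0,0))) x :=
        h2.const_mul _
      have h3 : HasDerivAt (fun x' : ℝ => c * x' * (c*t+d)⁻¹) (c * (c*t+d)⁻¹) x := by
        simpa using ((hasDerivAt_id x).const_mul c).mul_const ((c*t+d)⁻¹)
      exact (h1'.mul (h2'.fun_add h3)).congr_d (by field_simp; ring)
    have TU2 : deriv (fun x' => u x' y t * deriv (fun x0 => s x0 y t) x') x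
        = (c*t+d)⁻¹^4 * fderiv ℝ Uf (x/(c*t+d), y/(c*t+d), (a*t+b)/(c*t+d)) (1,0,0)
            * fderiv ℝ Sf (x/(c*t+d), y/(c*t+d), (a*t+b)/(c*t+d)) (1,0,0)
          + c*x*(c*t+d)⁻¹^4 * fderiv ℝ Uf (x/(c*t+d), y/(c*t+d), (a*t+b)/(c*t+d)) (1,0,0)
          + (c*t+d)⁻¹^4 * Uf (x/(c*t+d), y/(c*t+d), (a*t+b)/(c*t+d))
            * fderiv ℝ (fun q => fderiv ℝ Sf q (1,0,0)) (x/(c*t+d), y/(c*t+d), (a*t+b)/(c*t+d)) (1,0,0)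
          + c*(c*t+d)⁻¹^3 * Uf (x/(c*t+d), y/(c*t+d), (a*t+b)/(c*t+d)) := by
      rw [hsxf]; exact HF2.deriv
    have hsy : ∀ y', deriv (fun y0 => s x y0 t) y'
        = (c*t+d)⁻¹ * fderiv ℝ Sf (x/(c*t+d), y'/(c*t+d), (a*t+b)/(c*t+d)) (0,1,0)
          + c * σ * y' * (c*t+d)⁻¹ := by
      intro y'
      have hfe : (fun y0 => s x y0 t)
          = fun y0 => Sf (x/(c*t+d), y0/(c*t+d), (a*t+b)/(c*t+d))
              + c * (x^2 + σ*y0^2) / (2*(c*t+d)) := funext fun y0 => hs x y0 t hr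
      rw [hfe]
      have H1 : HasDerivAt (fun y0 => Sf (x/(c*t+d), y0/(c*t+d), (a*t+b)/(c*t+d)))
          ((c*t+d)⁻¹ * fderiv ℝ Sf (x/(c*t+d), y'/(c*t+d), (a*t+b)/(c*t+d)) (0,1,0)) y' :=
        hasDerivAt_comp3 Sf (hSd _) (hasDerivAt_const y' (x/(c*t+d))) (hdiv y')
          (hasDerivAt_const y' ((a*t+b)/(c*t+d))) rfl (by ring)
      have H2 : HasDerivAt (fun y0 => c * (x^2 + σ*y0^2) / (2*(c*t+d)))
          (c * σ * y' * (c*t+d)⁻¹) y' := by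
        have hh := ((((hasDerivAt_pow 2 y').const_mul σ).const_add (x^2)).const_mul c).div_const
          (2*(c*t+d))
        exact hh.congr_d (by field_simp; ring)
      exact (H1.add H2).deriv
    have hsyf : (fun y' => u x y' t * deriv (fun y0 => s x y0 t) y')
        = fun y' => (((c*t+d)^2)⁻¹ * Uf (x/(c*t+d), y'/(c*t+d), (a*t+b)/(c*t+d)))
            * ((c*t+d)⁻¹ * fderiv ℝ Sf (x/(c*t+d), y'/(c*t+d), (a*t+b)/(c*t+d)) (0,1,0)
              + c * σ * y' * (c*t+d)⁻¹) := by
      funext y'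
      rw [hsy y', hu x y' t hr]
    have HF3 : HasDerivAt (fun y' => (((c*t+d)^2)⁻¹ * Uf (x/(c*t+d), y'/(c*t+d), (a*t+b)/(c*t+d)))
            * ((c*t+d)⁻¹ * fderiv ℝ Sf (x/(c*t+d), y'/(c*t+d), (a*t+b)/(c*t+d)) (0,1,0)
              + c * σ * y' * (c*t+d)⁻¹))
        ((c*t+d)⁻¹^4 * fderiv ℝ Uf (x/(c*t+d), y/(c*t+d), (a*t+b)/(c*t+d)) (0,1,0)
            * fderiv ℝ Sf (x/(c*t+d), y/(c*t+d), (a*t+b)/(c*t+d)) (0,1,0)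
          + c*σ*y*(c*t+d)⁻¹^4 * fderiv ℝ Uf (x/(c*t+d), y/(c*t+d), (a*t+b)/(c*t+d)) (0,1,0)
          + (c*t+d)⁻¹^4 * Uf (x/(c*t+d), y/(c*t+d), (a*t+b)/(c*t+d))
            * fderiv ℝ (fun q => fderiv ℝ Sf q (0,1,0)) (x/(c*t+d), y/(c*t+d), (a*t+b)/(c*t+d)) (0,1,0)
          + c*σ*(c*t+d)⁻¹^3 * Uf (x/(c*t+d), y/(c*t+d), (a*t+b)/(c*t+d))) y := by
      have h1 : HasDerivAt (fun y' => Uf (x/(c*t+d), y'/(c*t+d), (a*t+b)/(c*t+d)))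
          ((c*t+d)⁻¹ * fderiv ℝ Uf (x/(c*t+d), y/(c*t+d), (a*t+b)/(c*t+d)) (0,1,0)) y :=
        hasDerivAt_comp3 Uf (hUd _) (hasDerivAt_const y (x/(c*t+d))) (hdiv y)
          (hasDerivAt_const y ((a*t+b)/(c*t+d))) rfl (by ring)
      have h1' : HasDerivAt (fun y' => ((c*t+d)^2)⁻¹ * Uf (x/(c*t+d), y'/(c*t+d), (a*t+b)/(c*t+d)))
          (((c*t+d)^2)⁻¹ * ((c*t+d)⁻¹ * fderiv ℝ Uf (x/(c*t+d), y/(c*t+d), (a*t+b)/(c*t+d)) (0,1,0))) y :=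
        h1.const_mul _
      have h2 : HasDerivAt (fun y' => fderiv ℝ Sf (x/(c*t+d), y'/(c*t+d), (a*t+b)/(c*t+d)) (0,1,0))
          ((c*t+d)⁻¹ * fderiv ℝ (fun q => fderiv ℝ Sf q (0,1,0)) (x/(c*t+d), y/(c*t+d), (a*t+b)/(c*t+d)) (0,1,0)) y :=
        hasDerivAt_comp3 (fun q => fderiv ℝ Sf q (0,1,0)) (hS2d _) (hasDerivAt_const y (x/(c*t+d)))
          (hdiv y) (hasDerivAt_const y ((a*t+b)/(c*t+d))) rfl (by ring)
      have h2' : HasDerivAt (fun y' => (c*t+d)⁻¹ * fderiv ℝ Sf (x/(c*t+d), y'/(c*t+d), (a*t+b)/(c*t+d)) (0,1,0))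
          ((c*t+d)⁻¹ * ((c*t+d)⁻¹ * fderiv ℝ (fun q => fderiv ℝ Sf q (0,1,0)) (x/(c*t+d), y/(c*t+d), (a*t+b)/(c*t+d)) (0,1,0))) y :=
        h2.const_mul _
      have h3 : HasDerivAt (fun y' : ℝ => c * σ * y' * (c*t+d)⁻¹) (c * σ * (c*t+d)⁻¹) y := by
        simpa using ((hasDerivAt_id y).const_mul (c*σ)).mul_const ((c*t+d)⁻¹)
      exact (h1'.mul (h2'.fun_add h3)).congr_d (by field_simp; ring)
    have TU3 : deriv (fun y' => u x y' t * deriv (fun y0 => s x y0 t) y') y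
        = (c*t+d)⁻¹^4 * fderiv ℝ Uf (x/(c*t+d), y/(c*t+d), (a*t+b)/(c*t+d)) (0,1,0)
            * fderiv ℝ Sf (x/(c*t+d), y/(c*t+d), (a*t+b)/(c*t+d)) (0,1,0)
          + c*σ*y*(c*t+d)⁻¹^4 * fderiv ℝ Uf (x/(c*t+d), y/(c*t+d), (a*t+b)/(c*t+d)) (0,1,0)
          + (c*t+d)⁻¹^4 * Uf (x/(c*t+d), y/(c*t+d), (a*t+b)/(c*t+d))
            * fderiv ℝ (fun q => fderiv ℝ Sf q (0,1,0)) (x/(c*t+d), y/(c*t+d), (a*t+b)/(c*t+d)) (0,1,0)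
          + c*σ*(c*t+d)⁻¹^3 * Uf (x/(c*t+d), y/(c*t+d), (a*t+b)/(c*t+d)) := by
      rw [hsyf]; exact HF3.deriv
    have hev_u : (fun t' => u x y t')
        =ᶠ[nhds t] fun t' => ((c*t'+d)^2)⁻¹ * Uf (x/(c*t'+d), y/(c*t'+d), (a*t'+b)/(c*t'+d)) :=
      hopen.mono fun t' ht' => hu x y t' ht'
    have hUt' : HasDerivAt (fun t' => Uf (x/(c*t'+d), y/(c*t'+d), (a*t'+b)/(c*t'+d)))
        (-(c*x) * (c*t+d)⁻¹^2 * fderiv ℝ Uf (x/(c*t+d), y/(c*t+d), (a*t+b)/(c*t+d)) (1,0,0)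
          + -(c*y) * (c*t+d)⁻¹^2 * fderiv ℝ Uf (x/(c*t+d), y/(c*t+d), (a*t+b)/(c*t+d)) (0,1,0)
          + (c*t+d)⁻¹^2 * fderiv ℝ Uf (x/(c*t+d), y/(c*t+d), (a*t+b)/(c*t+d)) (0,0,1)) t :=
      hasDerivAt_comp3 Uf (hUd _) hXt hYt hTt rfl (by ring)
    have HUt : HasDerivAt (fun t' => ((c*t'+d)^2)⁻¹ * Uf (x/(c*t'+d), y/(c*t'+d), (a*t'+b)/(c*t'+d)))
        (-2*c*(c*t+d)⁻¹^3 * Uf (x/(c*t+d), y/(c*t+d), (a*t+b)/(c*t+d))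
          + (c*t+d)⁻¹^2 * (-(c*x) * (c*t+d)⁻¹^2 * fderiv ℝ Uf (x/(c*t+d), y/(c*t+d), (a*t+b)/(c*t+d)) (1,0,0)
            + -(c*y) * (c*t+d)⁻¹^2 * fderiv ℝ Uf (x/(c*t+d), y/(c*t+d), (a*t+b)/(c*t+d)) (0,1,0)
            + (c*t+d)⁻¹^2 * fderiv ℝ Uf (x/(c*t+d), y/(c*t+d), (a*t+b)/(c*t+d)) (0,0,1))) t :=
      (hEt.mul hUt').congr_d (by field_simp; try ring)
    have TU1 : deriv (fun t' => u x y t') t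
        = -2*c*(c*t+d)⁻¹^3 * Uf (x/(c*t+d), y/(c*t+d), (a*t+b)/(c*t+d))
          + (c*t+d)⁻¹^2 * (-(c*x) * (c*t+d)⁻¹^2 * fderiv ℝ Uf (x/(c*t+d), y/(c*t+d), (a*t+b)/(c*t+d)) (1,0,0)
            + -(c*y) * (c*t+d)⁻¹^2 * fderiv ℝ Uf (x/(c*t+d), y/(c*t+d), (a*t+b)/(c*t+d)) (0,1,0)
            + (c*t+d)⁻¹^2 * fderiv ℝ Uf (x/(c*t+d), y/(c*t+d), (a*t+b)/(c*t+d)) (0,0,1)) :=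
      hev_u.deriv_eq.trans HUt.deriv
    rw [TU1, TU2, TU3]
    linear_combination (c*t+d)⁻¹^4 * E1 (x/(c*t+d)) (y/(c*t+d)) ((a*t+b)/(c*t+d))
      + (c*(c*t+d)⁻¹^3 * Uf (x/(c*t+d), y/(c*t+d), (a*t+b)/(c*t+d))
         + c*y*(c*t+d)⁻¹^4 * fderiv ℝ Uf (x/(c*t+d), y/(c*t+d), (a*t+b)/(c*t+d)) (0,1,0)) * hσ2
  · -- second equation
    simp only [pt, px, py]
    have hsx : ∀ x', deriv (fun x0 => s x0 y t) x'
        = (c*t+d)⁻¹ * fderiv ℝ Sf (x'/(c*t+d), y/(c*t+d), (a*t+b)/(c*t+d)) (1,0,0)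
          + c * x' * (c*t+d)⁻¹ := by
      intro x'
      have hfe : (fun x0 => s x0 y t)
          = fun x0 => Sf (x0/(c*t+d), y/(c*t+d), (a*t+b)/(c*t+d))
              + c * (x0^2 + σ*y^2) / (2*(c*t+d)) := funext fun x0 => hs x0 y t hr
      rw [hfe]
      have H1 : HasDerivAt (fun x0 => Sf (x0/(c*t+d), y/(c*t+d), (a*t+b)/(c*t+d)))
          ((c*t+d)⁻¹ * fderiv ℝ Sf (x'/(c*t+d), y/(c*t+d), (a*t+b)/(c*t+d)) (1,0,0)) x' :=
        hasDerivAt_comp3 Sf (hSd _) (hdiv x') (hasDerivAt_const x' (y/(c*t+d)))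
          (hasDerivAt_const x' ((a*t+b)/(c*t+d))) rfl (by ring)
      have H2 : HasDerivAt (fun x0 => c * (x0^2 + σ*y^2) / (2*(c*t+d)))
          (c * x' * (c*t+d)⁻¹) x' := by
        have hh := (((hasDerivAt_pow 2 x').add_const (σ*y^2)).const_mul c).div_const (2*(c*t+d))
        exact hh.congr_d (by field_simp; ring)
      exact (H1.add H2).deriv
    have hsy : ∀ y', deriv (fun y0 => s x y0 t) y'
        = (c*t+d)⁻¹ * fderiv ℝ Sf (x/(c*t+d), y'/(c*t+d), (a*t+b)/(c*t+d)) (0,1,0)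
          + c * σ * y' * (c*t+d)⁻¹ := by
      intro y'
      have hfe : (fun y0 => s x y0 t)
          = fun y0 => Sf (x/(c*t+d), y0/(c*t+d), (a*t+b)/(c*t+d))
              + c * (x^2 + σ*y0^2) / (2*(c*t+d)) := funext fun y0 => hs x y0 t hr
      rw [hfe]
      have H1 : HasDerivAt (fun y0 => Sf (x/(c*t+d), y0/(c*t+d), (a*t+b)/(c*t+d)))
          ((c*t+d)⁻¹ * fderiv ℝ Sf (x/(c*t+d), y'/(c*t+d), (a*t+b)/(c*t+d)) (0,1,0)) y' :=
        hasDerivAt_comp3 Sf (hSd _) (hasDerivAt_const y' (x/(c*t+d))) (hdiv y')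
          (hasDerivAt_const y' ((a*t+b)/(c*t+d))) rfl (by ring)
      have H2 : HasDerivAt (fun y0 => c * (x^2 + σ*y0^2) / (2*(c*t+d)))
          (c * σ * y' * (c*t+d)⁻¹) y' := by
        have hh := ((((hasDerivAt_pow 2 y').const_mul σ).const_add (x^2)).const_mul c).div_const
          (2*(c*t+d))
        exact hh.congr_d (by field_simp; ring)
      exact (H1.add H2).deriv
    have hev_s : (fun t' => s x y t')
        =ᶠ[nhds t] fun t' => Sf (x/(c*t'+d), y/(c*t'+d), (a*t'+b)/(c*t'+d))
            + c * (x^2 + σ*y^2) / (2*(c*t'+d)) :=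
      hopen.mono fun t' ht' => hs x y t' ht'
    have HS1 : HasDerivAt (fun t' => Sf (x/(c*t'+d), y/(c*t'+d), (a*t'+b)/(c*t'+d)))
        (-(c*x) * (c*t+d)⁻¹^2 * fderiv ℝ Sf (x/(c*t+d), y/(c*t+d), (a*t+b)/(c*t+d)) (1,0,0)
          + -(c*y) * (c*t+d)⁻¹^2 * fderiv ℝ Sf (x/(c*t+d), y/(c*t+d), (a*t+b)/(c*t+d)) (0,1,0)
          + (c*t+d)⁻¹^2 * fderiv ℝ Sf (x/(c*t+d), y/(c*t+d), (a*t+b)/(c*t+d)) (0,0,1)) t :=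
      hasDerivAt_comp3 Sf (hSd _) hXt hYt hTt rfl (by ring)
    have HS2 : HasDerivAt (fun t' => c * (x^2 + σ*y^2) / (2*(c*t'+d)))
        (-(c^2*(x^2+σ*y^2)) * (c*t+d)⁻¹^2 / 2) t := by
      have hh := (hasDerivAt_const t (c*(x^2+σ*y^2))).div (hdr.const_mul 2)
        (mul_ne_zero (by norm_num) hr')
      exact hh.congr_d (by field_simp; ring)
    have TS1 : deriv (fun t' => s x y t') t
        = (-(c*x) * (c*t+d)⁻¹^2 * fderiv ℝ Sf (x/(c*t+d), y/(c*t+d), (a*t+b)/(c*t+d)) (1,0,0)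
            + -(c*y) * (c*t+d)⁻¹^2 * fderiv ℝ Sf (x/(c*t+d), y/(c*t+d), (a*t+b)/(c*t+d)) (0,1,0)
            + (c*t+d)⁻¹^2 * fderiv ℝ Sf (x/(c*t+d), y/(c*t+d), (a*t+b)/(c*t+d)) (0,0,1))
          + -(c^2*(x^2+σ*y^2)) * (c*t+d)⁻¹^2 / 2 :=
      hev_s.deriv_eq.trans (HS1.add HS2).deriv
    rw [TS1, hsx x, hsy y, hφ x y t hr,
      show (((c*t+d)^2)⁻¹ : ℝ) = (c*t+d)⁻¹^2 from (inv_pow _ _).symm]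
    linear_combination (c*t+d)⁻¹^2 * E2 (x/(c*t+d)) (y/(c*t+d)) ((a*t+b)/(c*t+d))
      + (c*y*(c*t+d)⁻¹^2 * fderiv ℝ Sf (x/(c*t+d), y/(c*t+d), (a*t+b)/(c*t+d)) (0,1,0)
         + σ*c^2*y^2*(c*t+d)⁻¹^2/2) * hσ2
  · -- third equation
    simp only [pt, px, py]
    have hpxφ : ∀ x', deriv (fun x0 => φ x0 y t) x'
        = (c*t+d)⁻¹^3 * fderiv ℝ Φf (x'/(c*t+d), y/(c*t+d), (a*t+b)/(c*t+d)) (1,0,0) := by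
      intro x'
      have hfe : (fun x0 => φ x0 y t)
          = fun x0 => ((c*t+d)^2)⁻¹ * Φf (x0/(c*t+d), y/(c*t+d), (a*t+b)/(c*t+d)) :=
        funext fun x0 => hφ x0 y t hr
      rw [hfe]
      have h1 : HasDerivAt (fun x0 => Φf (x0/(c*t+d), y/(c*t+d), (a*t+b)/(c*t+d)))
          ((c*t+d)⁻¹ * fderiv ℝ Φf (x'/(c*t+d), y/(c*t+d), (a*t+b)/(c*t+d)) (1,0,0)) x' :=
        hasDerivAt_comp3 Φf (hΦd _) (hdiv x') (hasDerivAt_const x' (y/(c*t+d)))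
          (hasDerivAt_const x' ((a*t+b)/(c*t+d))) rfl (by ring)
      exact ((h1.const_mul (((c*t+d)^2)⁻¹)).congr_d (by simp only [← inv_pow]; ring)).deriv
    have hpyφ : ∀ y', deriv (fun y0 => φ x y0 t) y'
        = (c*t+d)⁻¹^3 * fderiv ℝ Φf (x/(c*t+d), y'/(c*t+d), (a*t+b)/(c*t+d)) (0,1,0) := by
      intro y'
      have hfe : (fun y0 => φ x y0 t)
          = fun y0 => ((c*t+d)^2)⁻¹ * Φf (x/(c*t+d), y0/(c*t+d), (a*t+b)/(c*t+d)) :=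
        funext fun y0 => hφ x y0 t hr
      rw [hfe]
      have h1 : HasDerivAt (fun y0 => Φf (x/(c*t+d), y0/(c*t+d), (a*t+b)/(c*t+d)))
          ((c*t+d)⁻¹ * fderiv ℝ Φf (x/(c*t+d), y'/(c*t+d), (a*t+b)/(c*t+d)) (0,1,0)) y' :=
        hasDerivAt_comp3 Φf (hΦd _) (hasDerivAt_const y' (x/(c*t+d))) (hdiv y')
          (hasDerivAt_const y' ((a*t+b)/(c*t+d))) rfl (by ring)
      exact ((h1.const_mul (((c*t+d)^2)⁻¹)).congr_d (by simp only [← inv_pow]; ring)).deriv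
    have hpxu : ∀ x', deriv (fun x0 => u x0 y t) x'
        = (c*t+d)⁻¹^3 * fderiv ℝ Uf (x'/(c*t+d), y/(c*t+d), (a*t+b)/(c*t+d)) (1,0,0) := by
      intro x'
      have hfe : (fun x0 => u x0 y t)
          = fun x0 => ((c*t+d)^2)⁻¹ * Uf (x0/(c*t+d), y/(c*t+d), (a*t+b)/(c*t+d)) :=
        funext fun x0 => hu x0 y t hr
      rw [hfe]
      have h1 : HasDerivAt (fun x0 => Uf (x0/(c*t+d), y/(c*t+d), (a*t+b)/(c*t+d)))
          ((c*t+d)⁻¹ * fderiv ℝ Uf (x'/(c*t+d), y/(c*t+d), (a*t+b)/(c*t+d)) (1,0,0)) x' :=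
        hasDerivAt_comp3 Uf (hUd _) (hdiv x') (hasDerivAt_const x' (y/(c*t+d)))
          (hasDerivAt_const x' ((a*t+b)/(c*t+d))) rfl (by ring)
      exact ((h1.const_mul (((c*t+d)^2)⁻¹)).congr_d (by simp only [← inv_pow]; ring)).deriv
    have hpyu : ∀ y', deriv (fun y0 => u x y0 t) y'
        = (c*t+d)⁻¹^3 * fderiv ℝ Uf (x/(c*t+d), y'/(c*t+d), (a*t+b)/(c*t+d)) (0,1,0) := by
      intro y'
      have hfe : (fun y0 => u x y0 t)
          = fun y0 => ((c*t+d)^2)⁻¹ * Uf (x/(c*t+d), y0/(c*t+d), (a*t+b)/(c*t+d)) :=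
        funext fun y0 => hu x y0 t hr
      rw [hfe]
      have h1 : HasDerivAt (fun y0 => Uf (x/(c*t+d), y0/(c*t+d), (a*t+b)/(c*t+d)))
          ((c*t+d)⁻¹ * fderiv ℝ Uf (x/(c*t+d), y'/(c*t+d), (a*t+b)/(c*t+d)) (0,1,0)) y' :=
        hasDerivAt_comp3 Uf (hUd _) (hasDerivAt_const y' (x/(c*t+d))) (hdiv y')
          (hasDerivAt_const y' ((a*t+b)/(c*t+d))) rfl (by ring)
      exact ((h1.const_mul (((c*t+d)^2)⁻¹)).congr_d (by simp only [← inv_pow]; ring)).deriv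
    have Tφyy : deriv (fun y' => deriv (fun y0 => φ x y0 t) y') y
        = (c*t+d)⁻¹^4 * fderiv ℝ (fun q => fderiv ℝ Φf q (0,1,0)) (x/(c*t+d), y/(c*t+d), (a*t+b)/(c*t+d)) (0,1,0) := by
      have hfe : (fun y' => deriv (fun y0 => φ x y0 t) y')
          = fun y' => (c*t+d)⁻¹^3 * fderiv ℝ Φf (x/(c*t+d), y'/(c*t+d), (a*t+b)/(c*t+d)) (0,1,0) :=
        funext fun y' => hpyφ y'
      rw [hfe]
      have h1 : HasDerivAt (fun y' => fderiv ℝ Φf (x/(c*t+d), y'/(c*t+d), (a*t+b)/(c*t+d)) (0,1,0))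
          ((c*t+d)⁻¹ * fderiv ℝ (fun q => fderiv ℝ Φf q (0,1,0)) (x/(c*t+d), y/(c*t+d), (a*t+b)/(c*t+d)) (0,1,0)) y :=
        hasDerivAt_comp3 (fun q => fderiv ℝ Φf q (0,1,0)) (hF2d _) (hasDerivAt_const y (x/(c*t+d)))
          (hdiv y) (hasDerivAt_const y ((a*t+b)/(c*t+d))) rfl (by ring)
      exact ((h1.const_mul ((c*t+d)⁻¹^3)).congr_d (by ring)).deriv
    have Tφxx : deriv (fun x' => deriv (fun x0 => φ x0 y t) x') x
        = (c*t+d)⁻¹^4 * fderiv ℝ (fun q => fderiv ℝ Φf q (1,0,0)) (x/(c*t+d), y/(c*t+d), (a*t+b)/(c*t+d)) (1,0,0) := by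
      have hfe : (fun x' => deriv (fun x0 => φ x0 y t) x')
          = fun x' => (c*t+d)⁻¹^3 * fderiv ℝ Φf (x'/(c*t+d), y/(c*t+d), (a*t+b)/(c*t+d)) (1,0,0) :=
        funext fun x' => hpxφ x'
      rw [hfe]
      have h1 : HasDerivAt (fun x' => fderiv ℝ Φf (x'/(c*t+d), y/(c*t+d), (a*t+b)/(c*t+d)) (1,0,0))
          ((c*t+d)⁻¹ * fderiv ℝ (fun q => fderiv ℝ Φf q (1,0,0)) (x/(c*t+d), y/(c*t+d), (a*t+b)/(c*t+d)) (1,0,0)) x :=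
        hasDerivAt_comp3 (fun q => fderiv ℝ Φf q (1,0,0)) (hF1d _) (hdiv x)
          (hasDerivAt_const x (y/(c*t+d))) (hasDerivAt_const x ((a*t+b)/(c*t+d))) rfl (by ring)
      exact ((h1.const_mul ((c*t+d)⁻¹^3)).congr_d (by ring)).deriv
    have Tuxx : deriv (fun x' => deriv (fun x0 => u x0 y t) x') x
        = (c*t+d)⁻¹^4 * fderiv ℝ (fun q => fderiv ℝ Uf q (1,0,0)) (x/(c*t+d), y/(c*t+d), (a*t+b)/(c*t+d)) (1,0,0) := by
      have hfe : (fun x' => deriv (fun x0 => u x0 y t) x')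
          = fun x' => (c*t+d)⁻¹^3 * fderiv ℝ Uf (x'/(c*t+d), y/(c*t+d), (a*t+b)/(c*t+d)) (1,0,0) :=
        funext fun x' => hpxu x'
      rw [hfe]
      have h1 : HasDerivAt (fun x' => fderiv ℝ Uf (x'/(c*t+d), y/(c*t+d), (a*t+b)/(c*t+d)) (1,0,0))
          ((c*t+d)⁻¹ * fderiv ℝ (fun q => fderiv ℝ Uf q (1,0,0)) (x/(c*t+d), y/(c*t+d), (a*t+b)/(c*t+d)) (1,0,0)) x :=
        hasDerivAt_comp3 (fun q => fderiv ℝ Uf q (1,0,0)) (hU1d _) (hdiv x)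
          (hasDerivAt_const x (y/(c*t+d))) (hasDerivAt_const x ((a*t+b)/(c*t+d))) rfl (by ring)
      exact ((h1.const_mul ((c*t+d)⁻¹^3)).congr_d (by ring)).deriv
    have Tuyy : deriv (fun y' => deriv (fun y0 => u x y0 t) y') y
        = (c*t+d)⁻¹^4 * fderiv ℝ (fun q => fderiv ℝ Uf q (0,1,0)) (x/(c*t+d), y/(c*t+d), (a*t+b)/(c*t+d)) (0,1,0) := by
      have hfe : (fun y' => deriv (fun y0 => u x y0 t) y')
          = fun y' => (c*t+d)⁻¹^3 * fderiv ℝ Uf (x/(c*t+d), y'/(c*t+d), (a*t+b)/(c*t+d)) (0,1,0) :=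
        funext fun y' => hpyu y'
      rw [hfe]
      have h1 : HasDerivAt (fun y' => fderiv ℝ Uf (x/(c*t+d), y'/(c*t+d), (a*t+b)/(c*t+d)) (0,1,0))
          ((c*t+d)⁻¹ * fderiv ℝ (fun q => fderiv ℝ Uf q (0,1,0)) (x/(c*t+d), y/(c*t+d), (a*t+b)/(c*t+d)) (0,1,0)) y :=
        hasDerivAt_comp3 (fun q => fderiv ℝ Uf q (0,1,0)) (hU2d _) (hasDerivAt_const y (x/(c*t+d)))
          (hdiv y) (hasDerivAt_const y ((a*t+b)/(c*t+d))) rfl (by ring)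
      exact ((h1.const_mul ((c*t+d)⁻¹^3)).congr_d (by ring)).deriv
    rw [Tφyy, Tφxx, Tuxx, Tuyy]
    linear_combination (c*t+d)⁻¹^4 * E3 (x/(c*t+d)) (y/(c*t+d)) ((a*t+b)/(c*t+d))
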